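/- Let G = (√5+1)/2. Define Φ(x) = 1/((2+x)²(G+1+x)) + (G+x)/((3+x)²(G+1+x)(G+2+x)) + (G+x)/((4+x)²(G+2+x)(G+3+x)) + (G+x)/((5+x)²(G+3+x)) for x ∈ [0,1]. Then Φ is decreasing on [0,1] and Φ(x) ≤ Φ(0) < 0.1346 for all x ∈ [0,1]. -/

import Mathlib

noncomputable def PhiNICF (x : ℝ) : ℝ :=
  let G : ℝ := (Real.sqrt 5 + 1) / 2
  1 / ((2 + x) ^ 2 * (G + 1 + x))
    + (G + x) / ((3 + x) ^ 2 * (G + 1 + x) * (G + 2 + x))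
    + (G + x) / ((4 + x) ^ 2 * (G + 2 + x) * (G + 3 + x))
    + (G + x) / ((5 + x) ^ 2 * (G + 3 + x))

/-!
Replace the golden ratio by a parameter `g`. For `0 ≤ a` and `0 ≤ t`, clearing denominators in
`Φ(a + t) ≤ Φ(a)` leaves, for the second and the third summand, a polynomial in `a`, `t`, `g - 1`
with nonnegative coefficients; the last summand increases near `0`, but together with the first one
it again gives such a polynomial (in `a`, `t`, `g`). Hence `Φ` is antitone on `[0, ∞)` for all
`g ≥ 1`. Likewise `0.1346 - Φ(0)`, cleared of denominators, is a polynomial in `g - 1.618` with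
positive coefficients.
-/

open Set Real goldenRatio

noncomputable def nicfPhi (g x : ℝ) : ℝ :=
  1 / ((2 + x) ^ 2 * (g + 1 + x))
    + (g + x) / ((3 + x) ^ 2 * (g + 1 + x) * (g + 2 + x))
    + (g + x) / ((4 + x) ^ 2 * (g + 2 + x) * (g + 3 + x))
    + (g + x) / ((5 + x) ^ 2 * (g + 3 + x))

theorem PhiNICF_eq_nicfPhi : PhiNICF = nicfPhi φ := by
  ext x
  rw [PhiNICF, nicfPhi, goldenRatio, add_comm 1]

theorem antitoneOn_Ici_of_add_le {f : ℝ → ℝ} {c : ℝ}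
    (hf : ∀ a t, c ≤ a → 0 ≤ t → f (a + t) ≤ f a) : AntitoneOn f (Ici c) := by
  intro a ha b _ hab
  simpa using hf a (b - a) ha (sub_nonneg.2 hab)

variable {g : ℝ}

set_option maxRecDepth 2000 in
theorem antitoneOn_nicfPhi_first_add_last (hg : 0 ≤ g) :
    AntitoneOn (fun x => 1 / ((2 + x) ^ 2 * (g + 1 + x)) + (g + x) / ((5 + x) ^ 2 * (g + 3 + x)))
      (Ici 0) := by
  refine antitoneOn_Ici_of_add_le fun a t (ha : 0 ≤ a) ht => ?_
  rw [div_add_div _ _ (by positivity) (by positivity),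
    div_add_div _ _ (by positivity) (by positivity),
    div_le_div_iff₀ (by positivity) (by positivity), ← sub_nonneg]
  ring_nf
  positivity

theorem antitoneOn_nicfPhi_second (hg : 1 ≤ g) :
    AntitoneOn (fun x => (g + x) / ((3 + x) ^ 2 * (g + 1 + x) * (g + 2 + x))) (Ici 0) := by
  obtain ⟨s, hs, rfl⟩ : ∃ s, 0 ≤ s ∧ g = 1 + s := ⟨g - 1, by linarith, by ring⟩
  refine antitoneOn_Ici_of_add_le fun a t (ha : 0 ≤ a) ht => ?_
  rw [div_le_div_iff₀ (by positivity) (by positivity), ← sub_nonneg]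
  ring_nf
  positivity

theorem antitoneOn_nicfPhi_third (hg : 1 ≤ g) :
    AntitoneOn (fun x => (g + x) / ((4 + x) ^ 2 * (g + 2 + x) * (g + 3 + x))) (Ici 0) := by
  obtain ⟨s, hs, rfl⟩ : ∃ s, 0 ≤ s ∧ g = 1 + s := ⟨g - 1, by linarith, by ring⟩
  refine antitoneOn_Ici_of_add_le fun a t (ha : 0 ≤ a) ht => ?_
  rw [div_le_div_iff₀ (by positivity) (by positivity), ← sub_nonneg]
  ring_nf
  positivity

theorem antitoneOn_nicfPhi (hg : 1 ≤ g) : AntitoneOn (nicfPhi g) (Ici 0) := by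
  convert ((antitoneOn_nicfPhi_first_add_last (by linarith)).add
    (antitoneOn_nicfPhi_second hg)).add (antitoneOn_nicfPhi_third hg) using 1
  ext x
  simp only [nicfPhi]
  ring

theorem nicfPhi_zero_lt (hg : 1.618 ≤ g) : nicfPhi g 0 < 0.1346 := by
  obtain ⟨s, hs, rfl⟩ : ∃ s, 0 ≤ s ∧ g = 1.618 + s := ⟨g - 1.618, by linarith, by ring⟩
  simp only [nicfPhi, add_zero]
  rw [div_add_div _ _ (by positivity) (by positivity),
    div_add_div _ _ (by positivity) (by positivity),
    div_add_div _ _ (by positivity) (by positivity),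
    div_lt_iff₀ (by positivity), ← sub_pos]
  ring_nf
  positivity

theorem goldenRatio_ge_1618 : (1.618 : ℝ) ≤ φ := by
  have : (2.236 : ℝ) ≤ √5 := Real.le_sqrt_of_sq_le (by norm_num)
  rw [goldenRatio]
  linarith

theorem PhiNICF_decreasing_and_bound :
    AntitoneOn PhiNICF (Set.Icc (0 : ℝ) 1) ∧
    (∀ x ∈ Set.Icc (0 : ℝ) 1, PhiNICF x ≤ PhiNICF 0) ∧
    PhiNICF 0 < 0.1346 := by
  rw [PhiNICF_eq_nicfPhi]
  have hanti : AntitoneOn (nicfPhi φ) (Icc 0 1) :=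
    (antitoneOn_nicfPhi one_lt_goldenRatio.le).mono Icc_subset_Ici_self
  exact ⟨hanti, fun x hx => hanti (left_mem_Icc.2 zero_le_one) hx hx.1,
    nicfPhi_zero_lt goldenRatio_ge_1618⟩
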